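/- For every integer n ≥ 2, the Mycielskian of the path P_n satisfies C(μ(P_n)) = (9n² + 95n + 14)/16 and B⁻(μ(P_n)) = (4n² − 6n + 8)/(2n + 3). -/

import Mathlib

open SimpleGraph Polynomial Finset

/-- The Mycielskian `μ(G)` of a simple graph `G`. Vertices `Sum.inl v` are the original
vertices `v_i`, vertices `Sum.inr (Sum.inl v)` are the shadow vertices `u_i`, and
`Sum.inr (Sum.inr ())` is the apex vertex `w`.  Edges: the edges of `G`, the edges `w u_i`,
and the edges `u_i v_j`, `u_j v_i` for every edge `v_i v_j` of `G`. -/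
def mycielskian {V : Type*} (G : SimpleGraph V) : SimpleGraph (V ⊕ V ⊕ Unit) :=
  SimpleGraph.fromRel (fun a b =>
    match a, b with
    | Sum.inl a, Sum.inl b => G.Adj a b
    | Sum.inl a, Sum.inr (Sum.inl b) => G.Adj a b
    | Sum.inr (Sum.inl _), Sum.inr (Sum.inr _) => True
    | _, _ => False)

/-- `distCount G k` is `d(G,k)`, the number of unordered pairs of distinct vertices of `G`
whose graph distance is exactly `k`. -/
noncomputable def distCount {V : Type*} (G : SimpleGraph V) (k : ℕ) : ℕ :=
  Nat.card {e : Sym2 V // ¬ e.IsDiag ∧ Sym2.lift ⟨G.dist, fun _ _ => G.dist_comm⟩ e = k}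

/-- The Hosoya polynomial `H(G,x) = Σ_{k=1}^{D(G)} d(G,k) x^k` (with rational coefficients). -/
noncomputable def hosoya {V : Type*} (G : SimpleGraph V) : Polynomial ℚ :=
  ∑ k ∈ Finset.Icc 1 G.diam, (distCount G k : ℚ) • Polynomial.X ^ k

/-- The Wiener index `W(G)`: the sum of distances over all unordered pairs of distinct
vertices (the diagonal contributes `0`, so we may sum over ordered pairs and halve). -/
noncomputable def wiener {V : Type*} (G : SimpleGraph V) [Fintype V] : ℚ :=
  (∑ u : V, ∑ v : V, (G.dist u v : ℚ)) / 2

/-- The Hyper-Wiener index `WW(G) = (1/2) Σ_{{u,v}} (d(u,v)² + d(u,v))`. -/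
noncomputable def hyperWiener {V : Type*} (G : SimpleGraph V) [Fintype V] : ℚ :=
  (∑ u : V, ∑ v : V, ((G.dist u v : ℚ) ^ 2 + (G.dist u v : ℚ))) / 4

/-- The TSZ index `TSZ(G) = (1/6) Σ_{{u,v}} d³ + (1/2) Σ_{{u,v}} d² + (1/3) Σ_{{u,v}} d`. -/
noncomputable def tszIndex {V : Type*} (G : SimpleGraph V) [Fintype V] : ℚ :=
  (∑ u : V, ∑ v : V, (G.dist u v : ℚ) ^ 3) / 12
    + (∑ u : V, ∑ v : V, (G.dist u v : ℚ) ^ 2) / 4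
    + (∑ u : V, ∑ v : V, (G.dist u v : ℚ)) / 6

/-- The Harary index `Har(G) = Σ_{{u,v}} 1/d(u,v)` (diagonal terms are `0⁻¹ = 0`). -/
noncomputable def harary {V : Type*} (G : SimpleGraph V) [Fintype V] : ℚ :=
  (∑ u : V, ∑ v : V, ((G.dist u v : ℚ))⁻¹) / 2

/-- The closeness `C(G) = Σ_u Σ_{v ≠ u} 2^{-d(u,v)}` over ordered pairs of distinct vertices. -/
noncomputable def closeness {V : Type*} (G : SimpleGraph V) [Fintype V] : ℚ :=
  letI := Classical.decEq V
  ∑ u : V, ∑ v : V, if v = u then 0 else ((1 : ℚ) / 2) ^ (G.dist u v)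

/-- `σ_{uv}`: the number of shortest paths (walks of length `dist u v`) from `u` to `v`. -/
noncomputable def numSP {V : Type*} (G : SimpleGraph V) (u v : V) : ℕ :=
  Nat.card {p : G.Walk u v // p.length = G.dist u v}

/-- `σ_{uv}(w)`: the number of shortest paths from `u` to `v` passing through `w`. -/
noncomputable def numSPthrough {V : Type*} (G : SimpleGraph V) (w u v : V) : ℕ :=
  Nat.card {p : G.Walk u v // p.length = G.dist u v ∧ w ∈ p.support}

/-- The betweenness centrality `B_w = Σ_{{u,v}, u ≠ w ≠ v} σ_{uv}(w)/σ_{uv}` of a vertex `w`,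
summed over unordered pairs of distinct vertices (ordered pairs, halved). -/
noncomputable def btwVertex {V : Type*} (G : SimpleGraph V) [Fintype V] (w : V) : ℚ :=
  letI := Classical.decEq V
  (∑ u : V, ∑ v : V,
    if u ≠ v ∧ u ≠ w ∧ v ≠ w then (numSPthrough G w u v : ℚ) / (numSP G u v) else 0) / 2

/-- The betweenness centrality of a graph: `B⁻(G) = (1/N) Σ_w B_w`. -/
noncomputable def btw {V : Type*} (G : SimpleGraph V) [Fintype V] : ℚ :=
  (∑ w : V, btwVertex G w) / (Fintype.card V)

/-- The star graph `S_n`: center `0` joined to the `n` leaves `1, …, n`. -/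
def starGraph (n : ℕ) : SimpleGraph (Fin (n + 1)) :=
  SimpleGraph.fromRel (fun a _ => a = 0)

/-- The join `G₁ ⊕ G₂` of two graphs on disjoint vertex sets: all edges of `G₁`, all edges
of `G₂`, and all edges between `V(G₁)` and `V(G₂)`. -/
def joinGraph {V₁ V₂ : Type*} (G₁ : SimpleGraph V₁) (G₂ : SimpleGraph V₂) :
    SimpleGraph (V₁ ⊕ V₂) :=
  SimpleGraph.fromRel (fun a b =>
    match a, b with
    | Sum.inl a, Sum.inl b => G₁.Adj a b
    | Sum.inr a, Sum.inr b => G₂.Adj a b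
    | Sum.inl _, Sum.inr _ => True
    | _, _ => False)

/-!
Distances in the Mycielskian of a connected graph `G` with at least two vertices are capped
distances of `G` (`mycielskianDist`): the formula is a lower bound because it changes by at most
one along each edge, and an upper bound by explicit short walks. For the path they depend only on
`|i - j|`, so both indices reduce to counting pairs of vertices at each distance. For the
betweenness, `∑_w σ_uv(w) / σ_uv` is the number `d(u, v) - 1` of interior vertices of a shortest
`u`–`v` path, so `∑_w B_w` is the Wiener index minus the number of pairs.
-/

namespace SimpleGraph

variable {V : Type*} {G : SimpleGraph V} {u v : V}

theorem Walk.apply_le_apply_add_length {f : V → ℕ} (hf : ∀ a c, G.Adj a c → f a ≤ f c + 1)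
    (p : G.Walk u v) : f u ≤ f v + p.length := by
  induction p with
  | nil => simp
  | cons h _ ih => have := hf _ _ h; rw [Walk.length_cons]; omega

theorem Reachable.apply_le_apply_add_dist {f : V → ℕ}
    (hf : ∀ a c, G.Adj a c → f a ≤ f c + 1) (h : G.Reachable u v) :
    f u ≤ f v + G.dist u v := by
  obtain ⟨p, hp⟩ := h.exists_walk_length_eq_dist
  exact hp ▸ p.apply_le_apply_add_length hf

theorem Connected.dist_le_dist_add_one_of_adj (hG : G.Connected) (h : G.Adj u v) (w : V) :
    G.dist u w ≤ G.dist v w + 1 := by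
  have := hG.dist_triangle (u := u) (v := v) (w := w)
  rw [dist_eq_one_iff_adj.mpr h] at this
  omega

theorem Reachable.dist_map_le {W : Type*} {G' : SimpleGraph W} (f : G →g G')
    (h : G.Reachable u v) : G'.dist (f u) (f v) ≤ G.dist u v := by
  obtain ⟨p, hp⟩ := h.exists_walk_length_eq_dist
  exact hp ▸ (dist_le (p.map f)).trans_eq (Walk.length_map f p)

theorem Walk.card_support_sdiff_of_length_eq_dist [DecidableEq V] {p : G.Walk u v}
    (hp : p.length = G.dist u v) (huv : u ≠ v) :
    #(p.support.toFinset \ {u, v}) = G.dist u v - 1 := by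
  have hcard : #p.support.toFinset = G.dist u v + 1 := by
    rw [List.toFinset_card_of_nodup (p.isPath_of_length_eq_dist hp).support_nodup,
      Walk.length_support, hp]
  rw [card_sdiff_of_subset (by simp [insert_subset_iff]), hcard, card_pair huv]
  omega

theorem pathGraph_dist {n : ℕ} (i j : Fin n) : (pathGraph n).dist i j = Nat.dist i j := by
  refine le_antisymm ?_ ?_
  · wlog hij : i ≤ j generalizing i j
    · rw [dist_comm, Nat.dist_comm]; exact this j i (le_of_not_ge hij)
    obtain ⟨k, hk⟩ := Nat.exists_eq_add_of_le (Fin.le_def.mp hij)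
    rw [show Nat.dist i j = k by simp only [Nat.dist]; omega]
    induction k generalizing i with
    | zero => simp [Fin.ext hk.symm]
    | succ k ih =>
      let i' : Fin n := ⟨i + 1, by omega⟩
      have hadj : (pathGraph n).Adj i i' := by simp [pathGraph_adj, i']
      have hi'j : (pathGraph n).dist i' j ≤ k :=
        ih i' (Fin.le_def.mpr (by simp [i']; omega)) (by simp [i']; omega)
      calc (pathGraph n).dist i j ≤ (pathGraph n).dist i i' + (pathGraph n).dist i' j :=
            hadj.reachable.dist_triangle_left j
        _ ≤ k + 1 := by rw [dist_eq_one_iff_adj.mpr hadj]; omega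
  · have := (pathGraph_preconnected n i j).apply_le_apply_add_dist
      (f := fun a : Fin n => Nat.dist a j) (fun a c h => by
        rw [pathGraph_adj] at h
        unfold Nat.dist
        omega)
    simpa [Nat.dist_self] using this

end SimpleGraph

section Mycielskian

variable {V : Type*} {G : SimpleGraph V} {x y : V}

@[simp] lemma mycielskian_adj_inl_inl : (mycielskian G).Adj (.inl x) (.inl y) ↔ G.Adj x y := by
  simp only [mycielskian, fromRel_adj, ne_eq, Sum.inl.injEq]
  exact ⟨fun h => h.2.elim id fun h => h.symm, fun h => ⟨G.ne_of_adj h, .inl h⟩⟩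

@[simp] lemma mycielskian_adj_inl_inr_inl :
    (mycielskian G).Adj (.inl x) (.inr (.inl y)) ↔ G.Adj x y := by
  simp [mycielskian]

@[simp] lemma mycielskian_adj_inr_inl_inl :
    (mycielskian G).Adj (.inr (.inl y)) (.inl x) ↔ G.Adj x y := by
  simp [mycielskian]

@[simp] lemma mycielskian_adj_inr_inl_inr_inr :
    (mycielskian G).Adj (.inr (.inl x)) (.inr (.inr ())) := by
  simp [mycielskian]

@[simp] lemma mycielskian_adj_inr_inr_inr_inl :
    (mycielskian G).Adj (.inr (.inr ())) (.inr (.inl x)) := by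
  simp [mycielskian]

@[simp] lemma mycielskian_not_adj_inl_inr_inr :
    ¬ (mycielskian G).Adj (.inl x) (.inr (.inr ())) := by
  simp [mycielskian]

@[simp] lemma mycielskian_not_adj_inr_inr_inl :
    ¬ (mycielskian G).Adj (.inr (.inr ())) (.inl x) := by
  simp [mycielskian]

@[simp] lemma mycielskian_not_adj_inr_inl_inr_inl :
    ¬ (mycielskian G).Adj (.inr (.inl x)) (.inr (.inl y)) := by
  simp [mycielskian]

variable (G) in
def mycielskianInlHom : G →g mycielskian G := ⟨Sum.inl, mycielskian_adj_inl_inl.mpr⟩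

lemma mycielskian_connected [Nontrivial V] (hG : G.Connected) : (mycielskian G).Connected := by
  have apex : ∀ a, (mycielskian G).Reachable a (.inr (.inr ())) := by
    rintro (x | x | ⟨⟨⟩⟩)
    · obtain ⟨y, hxy⟩ := hG.preconnected.exists_adj_of_nontrivial x
      exact (mycielskian_adj_inl_inr_inl.mpr hxy).reachable.trans
        mycielskian_adj_inr_inl_inr_inr.reachable
    · exact mycielskian_adj_inr_inl_inr_inr.reachable
    · rfl
  exact (connected_iff _).mpr ⟨fun a b => (apex a).trans (apex b).symm, ⟨.inr (.inr ())⟩⟩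

variable [DecidableEq V]

variable (G) in
noncomputable def mycielskianDist : V ⊕ V ⊕ Unit → V ⊕ V ⊕ Unit → ℕ
  | .inl x, .inl y => min (G.dist x y) 4
  | .inl x, .inr (.inl y) | .inr (.inl y), .inl x => if x = y then 2 else min (G.dist x y) 3
  | .inr (.inl x), .inr (.inl y) => if x = y then 0 else 2
  | .inl _, .inr (.inr _) | .inr (.inr _), .inl _ => 2
  | .inr (.inl _), .inr (.inr _) | .inr (.inr _), .inr (.inl _) => 1
  | .inr (.inr _), .inr (.inr _) => 0

lemma mycielskianDist_self (a : V ⊕ V ⊕ Unit) : mycielskianDist G a a = 0 := by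
  rcases a with x | x | _ <;> simp [mycielskianDist]

lemma mycielskianDist_le_add_one_of_adj (hG : G.Connected) {a c : V ⊕ V ⊕ Unit}
    (h : (mycielskian G).Adj a c) (b : V ⊕ V ⊕ Unit) :
    mycielskianDist G a b ≤ mycielskianDist G c b + 1 := by
  have zero_iff : ∀ x y : V, G.dist x y = 0 ↔ x = y := fun _ _ => hG.dist_eq_zero_iff
  -- Writing `x = z` as `G.dist x z = 0` leaves linear arithmetic in the distances of `G`.
  rcases a with x | x | ⟨⟨⟩⟩ <;> rcases c with y | y | ⟨⟨⟩⟩ <;> simp at h <;>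
    rcases b with z | z | ⟨⟨⟩⟩ <;> simp only [mycielskianDist, ← zero_iff]
  all_goals first
    | (try split_ifs) <;> omega
    | (have := hG.dist_le_dist_add_one_of_adj h z
       have := hG.dist_le_dist_add_one_of_adj h.symm z
       have := G.dist_comm (u := x) (v := z)
       have := G.dist_comm (u := y) (v := z)
       have := dist_eq_one_iff_adj.mpr h
       have := hG.dist_triangle (u := x) (v := z) (w := y)
       have := hG.dist_triangle (u := y) (v := z) (w := x)
       (try split_ifs) <;> omega)

lemma mycielskian_dist_inl_inr_inl_le [Nontrivial V] (hG : G.Connected) (x y : V) :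
    (mycielskian G).dist (.inl x) (.inr (.inl y)) ≤
      if x = y then 2 else min (G.dist x y) 3 := by
  obtain ⟨x', hx'⟩ := hG.preconnected.exists_adj_of_nontrivial x
  split_ifs with hxy
  · subst hxy
    exact dist_le (.cons (mycielskian_adj_inl_inl.mpr hx')
      (.cons (mycielskian_adj_inl_inr_inl.mpr hx'.symm) .nil))
  refine le_min ?_ (dist_le (.cons (mycielskian_adj_inl_inr_inl.mpr hx')
    (.cons mycielskian_adj_inr_inl_inr_inr
      (.cons (mycielskian_adj_inr_inr_inr_inl (x := y)) .nil))))
  obtain ⟨p, hp⟩ := hG.exists_walk_length_eq_dist y x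
  rw [SimpleGraph.dist_comm, G.dist_comm, ← hp]
  cases p with
  | nil => exact absurd rfl hxy
  | cons hyz q =>
    exact (dist_le (.cons (mycielskian_adj_inr_inl_inl.mpr hyz.symm)
      (q.map (mycielskianInlHom G)))).trans_eq (congrArg (· + 1) (q.length_map _))

lemma mycielskian_dist_le [Nontrivial V] (hG : G.Connected) (a b : V ⊕ V ⊕ Unit) :
    (mycielskian G).dist a b ≤ mycielskianDist G a b := by
  have nbr := hG.preconnected.exists_adj_of_nontrivial
  have vw : ∀ x, (mycielskian G).dist (.inl x) (.inr (.inr ())) ≤ 2 := by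
    intro x
    obtain ⟨x', hx'⟩ := nbr x
    exact dist_le (.cons (mycielskian_adj_inl_inr_inl.mpr hx')
      (.cons mycielskian_adj_inr_inl_inr_inr .nil))
  rcases a with x | x | ⟨⟨⟩⟩ <;> rcases b with y | y | ⟨⟨⟩⟩
  · obtain ⟨x', hx'⟩ := nbr x
    obtain ⟨y', hy'⟩ := nbr y
    refine le_min ((hG.preconnected x y).dist_map_le (mycielskianInlHom G)) ?_
    exact dist_le (.cons (mycielskian_adj_inl_inr_inl.mpr hx')
      (.cons mycielskian_adj_inr_inl_inr_inr (.cons mycielskian_adj_inr_inr_inr_inl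
        (.cons (mycielskian_adj_inr_inl_inl.mpr hy') .nil))))
  · exact mycielskian_dist_inl_inr_inl_le hG x y
  · exact vw x
  · rw [SimpleGraph.dist_comm]; exact mycielskian_dist_inl_inr_inl_le hG y x
  · simp only [mycielskianDist]
    split_ifs with hxy
    · simp [hxy]
    · exact dist_le (.cons mycielskian_adj_inr_inl_inr_inr
        (.cons (mycielskian_adj_inr_inr_inr_inl (x := y)) .nil))
  · exact dist_le (.cons mycielskian_adj_inr_inl_inr_inr .nil)
  · rw [SimpleGraph.dist_comm]; exact vw y
  · exact dist_le (.cons mycielskian_adj_inr_inr_inr_inl .nil)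
  · simp [mycielskianDist]

theorem mycielskian_dist [Nontrivial V] (hG : G.Connected) (a b : V ⊕ V ⊕ Unit) :
    (mycielskian G).dist a b = mycielskianDist G a b := by
  refine le_antisymm (mycielskian_dist_le hG a b) ?_
  simpa [mycielskianDist_self] using
    ((mycielskian_connected hG).preconnected a b).apply_le_apply_add_dist
      (f := fun c => mycielskianDist G c b)
      (fun _ _ h => mycielskianDist_le_add_one_of_adj hG h b)

end Mycielskian

section Centrality

variable {V : Type*} [Fintype V] {G : SimpleGraph V} {u v : V}

lemma closeness_eq_sum_sub_card :
    closeness G = ∑ u : V, ∑ v : V, (1 / 2 : ℚ) ^ G.dist u v - Fintype.card V := by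
  classical
  simp [closeness, Finset.sum_ite, Finset.filter_ne', Finset.sum_erase_eq_sub]

lemma numSP_ne_zero (h : G.Reachable u v) : numSP G u v ≠ 0 := by
  classical
  obtain ⟨p, hp⟩ := h.exists_walk_length_eq_dist
  exact Nat.card_ne_zero.mpr ⟨⟨p, hp⟩, inferInstance⟩

lemma sum_numSPthrough [DecidableEq V] (huv : u ≠ v) :
    ∑ w ∈ {u, v}ᶜ, numSPthrough G w u v = (G.dist u v - 1) * numSP G u v := by
  classical
  let P := {p : G.Walk u v // p.length = G.dist u v}
  have through (w : V) : numSPthrough G w u v = #{q : P | w ∈ q.1.support} := by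
    rw [numSPthrough, ← Fintype.card_subtype, ← Nat.card_eq_fintype_card]
    exact Nat.card_congr (Equiv.subtypeSubtypeEquivSubtypeInter _ _).symm
  have interior (q : P) : #{w ∈ ({u, v}ᶜ : Finset V) | w ∈ q.1.support} = G.dist u v - 1 := by
    rw [← q.1.card_support_sdiff_of_length_eq_dist q.2 huv]
    congr 1; ext w; simp [and_comm]
  calc ∑ w ∈ {u, v}ᶜ, numSPthrough G w u v
      = ∑ q : P, #{w ∈ ({u, v}ᶜ : Finset V) | w ∈ q.1.support} := by
        simp only [through]
        exact sum_card_bipartiteAbove_eq_sum_card_bipartiteBelow _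
    _ = (G.dist u v - 1) * numSP G u v := by
        simp only [interior, sum_const, card_univ, smul_eq_mul, numSP,
          Nat.card_eq_fintype_card, P]
        ring

lemma sum_numSPthrough_div_numSP [DecidableEq V] (h : G.Reachable u v) (huv : u ≠ v) :
    ∑ w ∈ {u, v}ᶜ, (numSPthrough G w u v : ℚ) / numSP G u v = G.dist u v - 1 := by
  have hσ : (numSP G u v : ℚ) ≠ 0 := Nat.cast_ne_zero.mpr (numSP_ne_zero h)
  rw [← sum_div, ← Nat.cast_sum, sum_numSPthrough huv, Nat.cast_mul,
    Nat.cast_sub (h.pos_dist_of_ne huv), mul_div_assoc, div_self hσ, mul_one, Nat.cast_one]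

lemma sum_btwVertex (hG : G.Preconnected) :
    ∑ w, btwVertex G w =
      (∑ u : V, ∑ v : V, (G.dist u v : ℚ) - Fintype.card V * (Fintype.card V - 1)) / 2 := by
  let := Classical.decEq V
  have pair (u v : V) : ∑ w, (if u ≠ v ∧ u ≠ w ∧ v ≠ w
      then (numSPthrough G w u v : ℚ) / numSP G u v else 0) =
      G.dist u v - 1 + if u = v then 1 else 0 := by
    by_cases huv : u = v
    · subst huv; simp
    rw [if_neg huv, add_zero, ← sum_numSPthrough_div_numSP (hG u v) huv, ← sum_filter]
    congr 1
    ext w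
    simp [huv, eq_comm]
  calc ∑ w, btwVertex G w
      = (∑ u, ∑ v, ∑ w, if u ≠ v ∧ u ≠ w ∧ v ≠ w
          then (numSPthrough G w u v : ℚ) / numSP G u v else 0) / 2 := by
        simp only [btwVertex, ← sum_div]
        rw [sum_comm]
        exact congrArg (· / 2) (sum_congr rfl fun u _ => sum_comm)
    _ = _ := by
        simp only [pair, sum_add_distrib, sum_sub_distrib, sum_ite_eq, mem_univ, ↓reduceIte,
          sum_const, card_univ, nsmul_eq_mul, mul_one]
        ring

end Centrality

lemma sum_fin_natDist_last (g : ℕ → ℚ) (hg : ∀ k ≥ 4, g k = g 4) {n : ℕ}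
    (hn : 2 ≤ n) :
    ∑ j : Fin (n + 1), g (Nat.dist (n + 1) j) = g 1 + g 2 + g 3 + (n - 2) * g 4 := by
  induction n, hn using Nat.le_induction with
  | base => simp [Fin.sum_univ_three, Nat.dist]; ring
  | succ n hn ih =>
    rw [Fin.sum_univ_succ]
    simp only [Fin.val_zero, Fin.val_succ, Nat.dist_zero_right, Nat.dist_succ_succ, ih,
      hg (n + 1 + 1) (by omega)]
    push_cast
    ring

lemma sum_sum_fin_natDist (g : ℕ → ℚ) (hg : ∀ k ≥ 4, g k = g 4) {n : ℕ} (hn : 2 ≤ n) :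
    ∑ i : Fin (n + 1), ∑ j : Fin (n + 1), g (Nat.dist i j) =
      (n + 1) * g 0 + 2 * (n * g 1 + (n - 1) * g 2 + (n - 2) * g 3) +
        (n - 2) * (n - 3) * g 4 := by
  induction n, hn using Nat.le_induction with
  | base => simp [Fin.sum_univ_three, Nat.dist]; ring
  | succ n hn ih =>
    have row := sum_fin_natDist_last g hg hn
    simp only [Fin.sum_univ_castSucc (n := n + 1), Fin.val_castSucc, Fin.val_last,
      Finset.sum_add_distrib, Nat.dist_self, ih, row, Nat.dist_comm _ (n + 1)]
    push_cast
    ring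

lemma sum_sum_mycielskian_pathGraph_dist (φ : ℕ → ℚ) {n : ℕ} (hn : 2 ≤ n) :
    ∑ a, ∑ b, φ ((mycielskian (pathGraph (n + 1))).dist a b) =
      (2 * n + 3) * φ 0 + (8 * n + 2) * φ 1 + (n ^ 2 + 11 * n - 2) * φ 2 +
        2 * n * (n - 2) * φ 3 + (n - 2) * (n - 3) * φ 4 := by
  have : Nontrivial (Fin (n + 1)) := Fin.nontrivial_iff_two_le.mpr (by omega)
  have hP := pathGraph_connected n
  simp only [mycielskian_dist hP, Fintype.sum_sum_type, Fintype.sum_unique, mycielskianDist,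
    ← hP.dist_eq_zero_iff, pathGraph_dist, sum_add_distrib]
  have vv := sum_sum_fin_natDist (fun k => φ (min k 4)) (fun k hk => by simp [hk]) hn
  have vu := sum_sum_fin_natDist (fun k => φ (if k = 0 then 2 else min k 3))
    (fun k hk => by simp [show k ≠ 0 by omega, show 3 ≤ k by omega]) hn
  have uu := sum_sum_fin_natDist (fun k => φ (if k = 0 then 0 else 2))
    (fun k hk => by simp [show k ≠ 0 by omega]) hn
  rw [sum_comm (f := fun i j : Fin (n + 1) =>
    φ (if Nat.dist j i = 0 then 2 else min (Nat.dist j i) 3)), vv, vu, uu]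
  simp only [sum_const, card_univ, Fintype.card_fin, nsmul_eq_mul]
  norm_num
  ring

/-- For `n ≥ 2`, the Mycielskian of the path `P_n` (on `n+1` vertices)
satisfies `C(μ(P_n)) = (9n² + 95n + 14)/16` and `B⁻(μ(P_n)) = (4n² - 6n + 8)/(2n+3)`. -/
theorem stmt_17 (n : ℕ) (hn : 2 ≤ n) :
    closeness (mycielskian (SimpleGraph.pathGraph (n + 1))) =
      (9 * (n : ℚ) ^ 2 + 95 * n + 14) / 16 ∧
    btw (mycielskian (SimpleGraph.pathGraph (n + 1))) =
      (4 * (n : ℚ) ^ 2 - 6 * n + 8) / (2 * n + 3) := by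
  have : Nontrivial (Fin (n + 1)) := Fin.nontrivial_iff_two_le.mpr (by omega)
  have hconn := mycielskian_connected (pathGraph_connected n)
  have hcard : (Fintype.card (Fin (n + 1) ⊕ Fin (n + 1) ⊕ Unit) : ℚ) = 2 * n + 3 := by
    simp only [Fintype.card_sum, Fintype.card_fin, Fintype.card_unit]
    push_cast
    ring
  constructor
  · rw [closeness_eq_sum_sub_card,
      sum_sum_mycielskian_pathGraph_dist (fun k => (1 / 2 : ℚ) ^ k) hn, hcard]
    ring
  · rw [_root_.btw, sum_btwVertex hconn.preconnected,
      sum_sum_mycielskian_pathGraph_dist (fun k => (k : ℚ)) hn, hcard]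
    field_simp
    ring
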